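/- An infinite countable locally finite group G admits a proper left invariant metric d_G with asdim_AN(G, d_G) > 0; equivalently, a countable locally finite group G is finite if and only if asdim_AN(G, d_G) = 0 for every proper left invariant metric d_G on G. -/

import Mathlib

/-!
Enumerate `G` and choose finite symmetric sets `A 0 ⊆ A 1 ⊆ ⋯` exhausting `G` such that
`⟨A n⟩` has more than `(#(A n) + 1) ^ (n * (n + 1)!)` elements; this is possible in every
infinite group because adjoining an element outside a subgroup at least doubles it. Giving the
letters first appearing in `A n` the weight `(n + 1)!` defines a proper left invariant word
metric. Its balls of radius `n * (n + 1)!` only involve letters from `A n`, hence are too small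
to contain `⟨A n⟩`, while every element of `⟨A n⟩` is joined to `1` by a chain with steps of size
at most `(n + 1)!`. So the diameters of the `s`-chain components are not bounded linearly in `s`.
-/

def ScaleChain {X : Type*} (d : X → X → ℝ) (s : ℝ) (U : Set X) (x y : X) : Prop :=
  ∃ (m : ℕ) (c : ℕ → X), c 0 = x ∧ c m = y ∧ (∀ i ≤ m, c i ∈ U) ∧
    ∀ i < m, d (c i) (c (i + 1)) < s

def IsControlFun {X : Type*} (d : X → X → ℝ) (n : ℕ) (D : ℝ → ℝ) : Prop :=
  ∀ s : ℝ, 0 < s → ∃ U : Fin (n + 1) → Set X,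
    (∀ x, ∃ i, x ∈ U i) ∧ ∀ i x y, ScaleChain d s (U i) x y → d x y ≤ D s

/-- Asymptotic Assouad-Nagata dimension at most `n`. -/
def ANdimLE {X : Type*} (d : X → X → ℝ) (n : ℕ) : Prop :=
  ∃ C : ℝ, 0 < C ∧ ∃ b : ℝ, IsControlFun d n (fun s => C * s + b)

/-- Asymptotic dimension at most `n`. -/
def AsdimLE {X : Type*} (d : X → X → ℝ) (n : ℕ) : Prop :=
  ∃ D : ℝ → ℝ, IsControlFun d n D

/-- `d` is a proper left invariant metric on the group `G`. -/
def IsPLIMetric {G : Type*} [Group G] (d : G → G → ℝ) : Prop :=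
  (∀ x y : G, d x y = 0 ↔ x = y) ∧ (∀ x y : G, d x y = d y x) ∧
    (∀ x y z : G, d x z ≤ d x y + d y z) ∧
    (∀ g x y : G, d (g * x) (g * y) = d x y) ∧
    ∀ K : ℝ, {g : G | d 1 g ≤ K}.Finite

/-- A group is locally finite if every finitely generated subgroup is finite. -/
def LocallyFiniteGroup (G : Type*) [Group G] : Prop :=
  ∀ s : Finset G, ((Subgroup.closure (s : Set G) : Subgroup G) : Set G).Finite

open Subgroup Pointwise

theorem exists_add_pow_lt_two_pow (c E : ℕ) : ∃ X : ℕ, (X + c) ^ E < 2 ^ X := by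
  have hlim := (tendsto_pow_const_div_const_pow_of_one_lt E one_lt_two).comp
    (Filter.tendsto_add_atTop_nat c)
  obtain ⟨X, hX⟩ := (hlim.eventually (gt_mem_nhds (by positivity : (0 : ℝ) < (2 ^ c)⁻¹))).exists
  refine ⟨X, ?_⟩
  have hX' : ((X + c : ℕ) : ℝ) ^ E < 2 ^ X := by
    rwa [Function.comp_apply, div_lt_iff₀ (by positivity), pow_add,
      mul_comm, mul_inv_cancel_right₀ (by positivity : (2 : ℝ) ^ c ≠ 0)] at hX
  exact_mod_cast hX'

section Growth

variable {G : Type*} [Group G]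

theorem two_mul_encard_closure_le_encard_closure_insert {s : Set G} {x : G}
    (hx : x ∉ closure s) :
    2 * (closure s : Set G).encard ≤ (closure (insert x s) : Set G).encard := by
  set H : Set G := closure s
  have hdisj : Disjoint H (x • H) := by
    rw [Set.disjoint_left]
    rintro _ hy ⟨h, hh, rfl⟩
    exact hx (by simpa using mul_mem hy (inv_mem hh))
  have hsub : H ∪ x • H ⊆ closure (insert x s) := by
    have hle : closure s ≤ closure (insert x s) := closure_mono (Set.subset_insert x s)
    rintro _ (hy | ⟨h, hh, rfl⟩)
    · exact hle hy
    · exact mul_mem (subset_closure (Set.mem_insert x s)) (hle hh)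
  calc 2 * H.encard = (H ∪ x • H).encard := by
        rw [Set.encard_union_eq hdisj, Set.encard_smul_set, two_mul]
    _ ≤ _ := Set.encard_le_encard hsub

theorem exists_card_le_two_pow_le_encard_closure [Infinite G] (X : ℕ) :
    ∃ B : Finset G, B.card ≤ X ∧ 2 ^ X ≤ (closure (B : Set G) : Set G).encard := by
  classical
  induction X with
  | zero => exact ⟨∅, le_rfl, by simp⟩
  | succ X ih =>
    obtain ⟨B, hBX, hB⟩ := ih
    by_cases htop : closure (B : Set G) = ⊤
    · refine ⟨B, hBX.trans X.le_succ, ?_⟩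
      simp [htop, Set.encard_univ]
    obtain ⟨x, hx⟩ : ∃ x, x ∉ closure (B : Set G) := by
      simpa [eq_top_iff'] using htop
    refine ⟨insert x B, (Finset.card_insert_le x B).trans (by omega), ?_⟩
    calc (2 : ℕ∞) ^ (X + 1) = 2 * 2 ^ X := pow_succ' 2 X
      _ ≤ 2 * (closure (B : Set G) : Set G).encard := by gcongr
      _ ≤ _ := by
        simpa using two_mul_encard_closure_le_encard_closure_insert hx

theorem exists_superset_inv_eq_pow_lt_encard_closure [Infinite G] (P : Finset G) (E : ℕ) :
    ∃ Q : Finset G, P ⊆ Q ∧ (Q : Set G)⁻¹ = Q ∧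
      ((Q.card + 1) ^ E : ℕ∞) < (closure (Q : Set G) : Set G).encard := by
  classical
  obtain ⟨X, hX⟩ := exists_add_pow_lt_two_pow (P.card + 1) (2 * E)
  obtain ⟨B, hBX, hB⟩ := exists_card_le_two_pow_le_encard_closure (G := G) X
  set R := P ∪ B
  refine ⟨R ∪ R⁻¹, Finset.subset_union_left.trans' Finset.subset_union_left,
    by push_cast; rw [Set.union_inv, inv_inv, Set.union_comm], ?_⟩
  -- `2 * a + 1 ≤ (a + 1) ^ 2` for `a = #P + X` absorbs the symmetrization into the exponent.
  have hcard : (R ∪ R⁻¹).card + 1 ≤ (X + (P.card + 1)) ^ 2 := by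
    have := Finset.card_union_le R R⁻¹
    have := Finset.card_union_le P B
    rw [Finset.card_inv] at *
    nlinarith
  have hclosure : closure (B : Set G) ≤ closure ((R ∪ R⁻¹ : Finset G) : Set G) :=
    closure_mono (by simp only [R]; push_cast; exact fun b hb => .inl (.inr hb))
  calc (((R ∪ R⁻¹).card + 1) ^ E : ℕ∞) ≤ (((X + (P.card + 1)) ^ (2 * E) : ℕ) : ℕ∞) := by
        rw [pow_mul]; exact_mod_cast Nat.pow_le_pow_left hcard E
    _ < 2 ^ X := by exact_mod_cast hX
    _ ≤ _ := hB.trans (Set.encard_le_encard hclosure)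

theorem exists_monotone_inv_eq_pow_lt_encard_closure [Infinite G] (e : ℕ → G) (E : ℕ → ℕ) :
    ∃ A : ℕ → Finset G, Monotone A ∧ (∀ n, e n ∈ A n) ∧ (∀ n, (A n : Set G)⁻¹ = A n) ∧
      ∀ n, (((A n).card + 1) ^ E n : ℕ∞) < (closure (A n : Set G) : Set G).encard := by
  classical
  choose Q hPQ hQinv hQ using fun (P : Finset G) (n : ℕ) =>
    exists_superset_inv_eq_pow_lt_encard_closure (insert (e n) P) (E n)
  let B : ℕ → Finset G := fun n => Nat.rec ∅ (fun k Bk => Q Bk k) n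
  refine ⟨fun n => B (n + 1), monotone_nat_of_le_succ fun n => ?_,
    fun n => hPQ _ _ (Finset.mem_insert_self _ _), fun n => hQinv _ _, fun n => hQ _ _⟩
  exact (Finset.subset_insert _ _).trans (hPQ (B (n + 1)) (n + 1))

end Growth

section WordLength

variable {G : Type*} [Group G] (ω : G → ℕ)

noncomputable def wordLength (g : G) : ℕ :=
  sInf {t | ∃ l : List G, l.prod = g ∧ (l.map ω).sum = t}

theorem exists_list_prod_eq_sum_eq_wordLength (g : G) :
    ∃ l : List G, l.prod = g ∧ (l.map ω).sum = wordLength ω g :=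
  Nat.sInf_mem (s := {t | ∃ l : List G, l.prod = g ∧ (l.map ω).sum = t}) ⟨ω g, [g], by simp⟩

theorem wordLength_prod_le (l : List G) : wordLength ω l.prod ≤ (l.map ω).sum :=
  Nat.sInf_le ⟨l, rfl, rfl⟩

theorem wordLength_le (g : G) : wordLength ω g ≤ ω g := by
  simpa using wordLength_prod_le ω [g]

theorem wordLength_mul_le (g h : G) : wordLength ω (g * h) ≤ wordLength ω g + wordLength ω h := by
  obtain ⟨l₁, rfl, h₁⟩ := exists_list_prod_eq_sum_eq_wordLength ω g
  obtain ⟨l₂, rfl, h₂⟩ := exists_list_prod_eq_sum_eq_wordLength ω h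
  simpa [← h₁, ← h₂] using wordLength_prod_le ω (l₁ ++ l₂)

theorem wordLength_inv_le {ω : G → ℕ} (hω : ∀ a, ω a⁻¹ = ω a) (g : G) :
    wordLength ω g⁻¹ ≤ wordLength ω g := by
  obtain ⟨l, rfl, hl⟩ := exists_list_prod_eq_sum_eq_wordLength ω g
  simpa [List.prod_inv_reverse, Function.comp_def, hω, ← hl] using
    wordLength_prod_le ω (l.map (·⁻¹)).reverse

theorem wordLength_inv {ω : G → ℕ} (hω : ∀ a, ω a⁻¹ = ω a) (g : G) :
    wordLength ω g⁻¹ = wordLength ω g :=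
  (wordLength_inv_le hω g).antisymm (by simpa using wordLength_inv_le hω g⁻¹)

theorem wordLength_eq_zero {ω : G → ℕ} (hω : ∀ a, 0 < ω a) {g : G} :
    wordLength ω g = 0 ↔ g = 1 := by
  refine ⟨fun h => ?_, fun h => Nat.le_zero.mp (by simpa [h] using wordLength_prod_le ω [])⟩
  obtain ⟨l, rfl, hl⟩ := exists_list_prod_eq_sum_eq_wordLength ω g
  rw [h, List.sum_eq_zero_iff] at hl
  have : l = [] := List.eq_nil_iff_forall_not_mem.mpr fun a ha =>
    (hω a).ne' (hl _ (List.mem_map_of_mem ha))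
  simp [this]

theorem encard_setOf_wordLength_le {ω : G → ℕ} (hω : ∀ a, 0 < ω a) {S : Finset G} {L : ℕ}
    (hS : ∀ a, ω a ≤ L → a ∈ S) :
    {g | wordLength ω g ≤ L}.encard ≤ ((S.card + 1) ^ L : ℕ) := by
  classical
  have hball : {g | wordLength ω g ≤ L} ⊆ ((insert 1 S ^ L : Finset G) : Set G) := by
    intro g hg
    obtain ⟨l, rfl, hl⟩ := exists_list_prod_eq_sum_eq_wordLength ω g
    have hsum : (l.map ω).sum ≤ L := hl ▸ hg
    have hlen : l.length ≤ L := by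
      have hpos : ∀ t ∈ l.map ω, 1 ≤ t := by simpa using fun a _ => Nat.succ_le_of_lt (hω a)
      simpa using (List.length_le_sum_of_one_le _ hpos).trans hsum
    refine Finset.pow_subset_pow_right (Finset.mem_insert_self 1 S) hlen
      (Finset.mem_pow.mpr ⟨fun i => ⟨l[i], Finset.mem_insert_of_mem (hS _ ?_)⟩, by simp⟩)
    exact (List.le_sum_of_mem (List.mem_map_of_mem (List.getElem_mem _))).trans hsum
  calc {g | wordLength ω g ≤ L}.encard ≤ ((insert 1 S ^ L : Finset G) : Set G).encard :=
        Set.encard_le_encard hball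
    _ ≤ ((S.card + 1) ^ L : ℕ) := by
        rw [Set.encard_coe_eq_coe_finsetCard]
        exact_mod_cast Finset.card_pow_le.trans
          (Nat.pow_le_pow_left (Finset.card_insert_le 1 S) L)

end WordLength

theorem isPLIMetric_of_length {G : Type*} [Group G] {ℓ : G → ℕ} (hzero : ∀ g, ℓ g = 0 ↔ g = 1)
    (hinv : ∀ g, ℓ g⁻¹ = ℓ g) (hmul : ∀ g h, ℓ (g * h) ≤ ℓ g + ℓ h)
    (hfin : ∀ K : ℕ, {g | ℓ g ≤ K}.Finite) :
    IsPLIMetric fun x y : G => (ℓ (x⁻¹ * y) : ℝ) := by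
  refine ⟨fun x y => ?_, fun x y => ?_, fun x y z => ?_, fun g x y => ?_, fun K => ?_⟩ <;>
    dsimp only
  · rw [Nat.cast_eq_zero, hzero, inv_mul_eq_one]
  · rw [← hinv, mul_inv_rev, inv_inv]
  · have h := hmul (x⁻¹ * y) (y⁻¹ * z)
    rw [mul_assoc, mul_inv_cancel_left] at h
    exact_mod_cast h
  · rw [mul_inv_rev, mul_assoc, inv_mul_cancel_left]
  · refine (hfin ⌊K⌋₊).subset fun g hg => ?_
    simpa using Nat.le_floor (by simpa using hg : (ℓ g : ℝ) ≤ K)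

section ScaleChains

variable {X : Type*} (d : X → X → ℝ)

theorem ScaleChain.mono {d : X → X → ℝ} {s : ℝ} {U V : Set X} {x y : X}
    (h : ScaleChain d s U x y) (hUV : U ⊆ V) : ScaleChain d s V x y := by
  obtain ⟨m, c, h0, hm, hU, hs⟩ := h
  exact ⟨m, c, h0, hm, fun i hi => hUV (hU i hi), hs⟩

theorem ANdimLE_zero_iff : ANdimLE d 0 ↔ ∃ C : ℝ, 0 < C ∧ ∃ b : ℝ, ∀ s : ℝ, 0 < s →
    ∀ x y, ScaleChain d s Set.univ x y → d x y ≤ C * s + b := by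
  refine ⟨fun ⟨C, hC, b, hCb⟩ => ⟨C, hC, b, fun s hs x y hxy => ?_⟩,
    fun ⟨C, hC, b, hCb⟩ => ⟨C, hC, b, fun s hs => ⟨fun _ => Set.univ, fun x => ⟨0, trivial⟩,
      fun _ => hCb s hs⟩⟩⟩
  obtain ⟨U, hcover, hU⟩ := hCb s hs
  exact hU 0 x y (hxy.mono fun z _ => by simpa [Fin.fin_one_eq_zero] using hcover z)

theorem ANdimLE_zero_of_finite [Finite X] : ANdimLE d 0 := by
  obtain ⟨B, hB⟩ := (Set.finite_range (Function.uncurry d)).bddAbove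
  refine (ANdimLE_zero_iff d).mpr ⟨1, one_pos, B, fun s hs x y _ => ?_⟩
  linarith [hB ⟨(x, y), rfl⟩, show d x y = Function.uncurry d (x, y) from rfl]

theorem scaleChain_one_list_prod {G : Type*} [Group G] {d : G → G → ℝ}
    (hd : ∀ g x y, d (g * x) (g * y) = d x y) {s : ℝ} (l : List G) (hl : ∀ a ∈ l, d 1 a < s) :
    ScaleChain d s Set.univ 1 l.prod := by
  refine ⟨l.length, fun i => (l.take i).prod, by simp, by simp, fun _ _ => trivial,
    fun i hi => ?_⟩
  dsimp only
  rw [List.prod_take_succ _ _ hi, ← mul_one (l.take i).prod, mul_assoc, hd, one_mul]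
  exact hl _ (List.getElem_mem hi)

end ScaleChains

theorem Subgroup.exists_list_of_mem_closure_of_inv_eq {G : Type*} [Group G] {s : Set G}
    (hs : s⁻¹ = s) {g : G} (hg : g ∈ closure s) : ∃ l : List G, (∀ a ∈ l, a ∈ s) ∧ l.prod = g := by
  rw [← mem_toSubmonoid, closure_toSubmonoid, hs, Set.union_self] at hg
  exact Submonoid.exists_list_of_mem_closure hg

section LevelWeight

variable {G : Type*} {A : ℕ → Finset G}

variable (A) in
noncomputable def levelWeight (a : G) : ℕ := (sInf {n | a ∈ A n} + 1).factorial

theorem levelWeight_pos (a : G) : 0 < levelWeight A a := Nat.factorial_pos _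

theorem levelWeight_le_of_mem {a : G} {n : ℕ} (h : a ∈ A n) :
    levelWeight A a ≤ (n + 1).factorial :=
  Nat.factorial_le (Nat.succ_le_succ (Nat.sInf_le h))

theorem mem_of_levelWeight_le (hA : Monotone A) {a : G} (ha : ∃ n, a ∈ A n) {n : ℕ}
    (h : levelWeight A a ≤ n * (n + 1).factorial) : a ∈ A n := by
  have hmin : sInf {n | a ∈ A n} ∈ {n | a ∈ A n} := Nat.sInf_mem ha
  refine hA ?_ hmin
  by_contra! hlt
  have hle : (n + 2).factorial ≤ levelWeight A a := Nat.factorial_le (by omega)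
  rw [Nat.factorial_succ (n + 1)] at hle
  nlinarith [Nat.factorial_pos (n + 1)]

theorem levelWeight_inv [Group G] (hA : ∀ n, (A n : Set G)⁻¹ = A n) (a : G) :
    levelWeight A a⁻¹ = levelWeight A a := by
  simp only [levelWeight, ← Finset.mem_coe, ← Set.mem_inv, hA]

variable [Group G] (hA : Monotone A) (hcover : ∀ a, ∃ n, a ∈ A n)
include hA hcover

theorem encard_setOf_wordLength_levelWeight_le (n : ℕ) :
    {g | wordLength (levelWeight A) g ≤ n * (n + 1).factorial}.encard ≤
      (((A n).card + 1) ^ (n * (n + 1).factorial) : ℕ) :=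
  encard_setOf_wordLength_le levelWeight_pos fun a => mem_of_levelWeight_le hA (hcover a)

theorem isPLIMetric_wordLength_levelWeight (hAinv : ∀ n, (A n : Set G)⁻¹ = A n) :
    IsPLIMetric fun x y : G => (wordLength (levelWeight A) (x⁻¹ * y) : ℝ) := by
  refine isPLIMetric_of_length (fun g => wordLength_eq_zero levelWeight_pos)
    (wordLength_inv (levelWeight_inv hAinv)) (wordLength_mul_le _) fun K => ?_
  refine Set.finite_of_encard_le_coe
    (encard_setOf_wordLength_le (S := A K) levelWeight_pos fun a ha => ?_)
  exact mem_of_levelWeight_le hA (hcover a)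
    (ha.trans (Nat.le_mul_of_pos_right K (Nat.factorial_pos _)))

theorem not_ANdimLE_zero_wordLength_levelWeight (hAinv : ∀ n, (A n : Set G)⁻¹ = A n)
    (hgrowth : ∀ n, (((A n).card + 1) ^ (n * (n + 1).factorial) : ℕ∞) <
      (closure (A n : Set G) : Set G).encard) :
    ¬ ANdimLE (fun x y : G => (wordLength (levelWeight A) (x⁻¹ * y) : ℝ)) 0 := by
  set ℓ := wordLength (levelWeight A)
  rw [ANdimLE_zero_iff]
  rintro ⟨C, hC, b, hCb⟩
  obtain ⟨n, hn⟩ := exists_nat_ge (2 * C + |b|)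
  set W := (n + 1).factorial
  obtain ⟨g, hg, hgW⟩ : ∃ g ∈ closure (A n : Set G), n * W < ℓ g := by
    by_contra! h
    exact (hgrowth n).not_ge
      ((Set.encard_le_encard h).trans (encard_setOf_wordLength_levelWeight_le hA hcover n))
  obtain ⟨l, hl, rfl⟩ := exists_list_of_mem_closure_of_inv_eq (hAinv n) hg
  have hchain := scaleChain_one_list_prod (d := fun x y => (ℓ (x⁻¹ * y) : ℝ))
    (isPLIMetric_wordLength_levelWeight hA hcover hAinv).2.2.2.1 (s := W + 1) l fun a ha => by
      have h := (wordLength_le _ a).trans (levelWeight_le_of_mem (hl a ha))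
      simp only [inv_one, one_mul]
      exact_mod_cast Nat.lt_succ_of_le h
  have hbound := hCb (W + 1) (by positivity) 1 l.prod hchain
  simp only [inv_one, one_mul] at hbound
  have hW : (1 : ℝ) ≤ W := Nat.one_le_cast.mpr (Nat.factorial_pos _)
  have hgW' : (n : ℝ) * W < ℓ l.prod := by exact_mod_cast hgW
  have hlin : C * (W + 1) + b ≤ (2 * C + |b|) * W := by
    nlinarith [le_abs_self b, abs_nonneg b]
  nlinarith [mul_le_mul_of_nonneg_right hn (by positivity : (0 : ℝ) ≤ W)]

end LevelWeight

theorem exists_isPLIMetric_not_ANdimLE_zero {G : Type*} [Group G] [Countable G] [Infinite G] :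
    ∃ d : G → G → ℝ, IsPLIMetric d ∧ ¬ ANdimLE d 0 := by
  obtain ⟨e, he⟩ := exists_surjective_nat G
  obtain ⟨A, hA, heA, hAinv, hgrowth⟩ :=
    exists_monotone_inv_eq_pow_lt_encard_closure e fun n => n * (n + 1).factorial
  have hcover (a : G) : ∃ n, a ∈ A n := by
    obtain ⟨n, rfl⟩ := he a
    exact ⟨n, heA n⟩
  exact ⟨_, isPLIMetric_wordLength_levelWeight hA hcover hAinv,
    not_ANdimLE_zero_wordLength_levelWeight hA hcover hAinv hgrowth⟩

theorem finite_iff_asdimAN_zero_forall_metric_general {G : Type*} [Group G] [Countable G] :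
    Finite G ↔ ∀ d : G → G → ℝ, IsPLIMetric d → ANdimLE d 0 := by
  refine ⟨fun _ d _ => ANdimLE_zero_of_finite d, fun h => ?_⟩
  by_contra hfin
  have : Infinite G := not_finite_iff_infinite.mp hfin
  obtain ⟨d, hd, hnot⟩ := exists_isPLIMetric_not_ANdimLE_zero (G := G)
  exact hnot (h d hd)

/-- A countable locally finite group is finite if and only if it has asymptotic
Assouad-Nagata dimension `0` for every proper left invariant metric. -/
theorem finite_iff_asdimAN_zero_forall_metric {G : Type*} [Group G] [Countable G]
    (hLF : LocallyFiniteGroup G) :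
    Finite G ↔ ∀ d : G → G → ℝ, IsPLIMetric d → ANdimLE d 0 :=
  finite_iff_asdimAN_zero_forall_metric_general
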